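/- arXiv:1806.09734 — 2 statements merged into one kernel-verified Lean document; each statement's English description precedes it below -/
import Mathlib

section
/- For matrices L⁰ and L̂ in ℝ^{m₁×m₂}, with P_{L⁰⊥} the projection X ↦ P_{S₁⊥} X P_{S₂⊥} onto the complement of the row/column spaces of L⁰ and P_{L⁰} = Id − P_{L⁰⊥}, setting ΔL = L⁰ − L̂, one has ‖L⁰‖_* − ‖L̂‖_* ≤ ‖P_{L⁰}(ΔL)‖_* − ‖P_{L⁰⊥}(ΔL)‖_*. -/
open Matrix
/-- The nuclear norm of a real matrix: the trace of `√(Aᵀ A)`, i.e. the sum of the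
singular values of `A`. -/
noncomputable def nuclearNorm {m n : ℕ} (A : Matrix (Fin m) (Fin n) ℝ) : ℝ :=
  (((Matrix.posSemidef_conjTranspose_mul_self A).1.eigenvectorUnitary : Matrix (Fin n) (Fin n) ℝ) *
    diagonal ((RCLike.ofReal : ℝ → ℝ) ∘ (√·) ∘ (Matrix.posSemidef_conjTranspose_mul_self A).1.eigenvalues) *
    (star (Matrix.posSemidef_conjTranspose_mul_self A).1.eigenvectorUnitary :
      Matrix (Fin n) (Fin n) ℝ)).trace

/-!
Write `A = P₁ ΔL P₂`. As `P₁` and `P₂` project onto the orthogonal complements of the column and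
row spaces of `L⁰`, we have `L⁰ᴴ A = 0` and `L⁰ Aᴴ = 0`. Then the Gram matrices `L⁰ᴴ L⁰` and
`Aᴴ A` multiply to zero, so their square roots add, which gives `‖L⁰ - A‖_* = ‖L⁰‖_* + ‖A‖_*`.
Since `L⁰ - A = L̂ + (ΔL - A)`, the triangle inequality for `‖·‖_*` finishes the proof. The
triangle inequality comes from the duality `‖A‖_* = max {tr (Zᴴ A) | Zᴴ Z ≤ 1}`, the maximum
being attained at the partial isometry of the polar decomposition of `A`.
-/

open scoped MatrixOrder ComplexOrder

namespace Matrix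

lemma trace_conjTranspose_mul_le_sum_sqrt_diag {k n : Type*} [Fintype k] [Fintype n]
    (X Y : Matrix k n ℝ) :
    (Xᴴ * Y).trace ≤ ∑ j, √((Xᴴ * X) j j) * √((Yᴴ * Y) j j) := by
  simp only [trace, diag_apply, mul_apply, conjTranspose_apply, star_trivial]
  gcongr with j
  simpa only [sq] using Real.sum_mul_le_sqrt_mul_sqrt Finset.univ (X · j) (Y · j)

variable {n 𝕜 : Type*} [Fintype n] [DecidableEq n] [RCLike 𝕜]

/-- Because `(√S Z)ᴴ (√S Z) = Zᴴ S Z = 0`. -/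
lemma sqrt_mul_eq_zero {k : Type*} {S : Matrix n n 𝕜} (hS : 0 ≤ S) {Z : Matrix n k 𝕜}
    (h : S * Z = 0) : CFC.sqrt S * Z = 0 := by
  rw [← conjTranspose_mul_self_eq_zero, conjTranspose_mul, ← star_eq_conjTranspose,
    (CFC.sqrt_nonneg S).isSelfAdjoint.star_eq, Matrix.mul_assoc, ← Matrix.mul_assoc (CFC.sqrt S),
    CFC.sqrt_mul_sqrt_self S hS, h, Matrix.mul_zero]

lemma sqrt_mul_sqrt_eq_zero {S T : Matrix n n 𝕜} (hS : 0 ≤ S) (hT : 0 ≤ T) (h : S * T = 0) :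
    CFC.sqrt S * CFC.sqrt T = 0 := by
  have hTS : T * CFC.sqrt S = 0 := by
    simpa [(CFC.sqrt_nonneg S).isSelfAdjoint.star_eq, hT.isSelfAdjoint.star_eq] using
      congrArg star (sqrt_mul_eq_zero hS h)
  simpa [(CFC.sqrt_nonneg S).isSelfAdjoint.star_eq, (CFC.sqrt_nonneg T).isSelfAdjoint.star_eq] using
    congrArg star (sqrt_mul_eq_zero hT hTS)

lemma sqrt_add_of_mul_eq_zero {S T : Matrix n n 𝕜} (hS : 0 ≤ S) (hT : 0 ≤ T) (h : S * T = 0) :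
    CFC.sqrt (S + T) = CFC.sqrt S + CFC.sqrt T := by
  have hTS : T * S = 0 := by
    simpa [hS.isSelfAdjoint.star_eq, hT.isSelfAdjoint.star_eq] using congrArg star h
  refine CFC.sqrt_unique ?_ (add_nonneg (CFC.sqrt_nonneg S) (CFC.sqrt_nonneg T))
  rw [Matrix.add_mul, Matrix.mul_add, Matrix.mul_add, sqrt_mul_sqrt_eq_zero hS hT h,
    sqrt_mul_sqrt_eq_zero hT hS hTS, CFC.sqrt_mul_sqrt_self S hS, CFC.sqrt_mul_sqrt_self T hT,
    add_zero, zero_add]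

end Matrix

section NuclearNorm

variable {m n : ℕ}

lemma nuclearNorm_eq_trace_sqrt (A : Matrix (Fin m) (Fin n) ℝ) :
    nuclearNorm A = (CFC.sqrt (Aᴴ * A)).trace := by
  have hA := posSemidef_conjTranspose_mul_self A
  rw [CFC.sqrt_eq_real_sqrt _ hA.nonneg, cfcₙ_eq_cfc, hA.1.cfc_eq]
  rfl

lemma nuclearNorm_neg (A : Matrix (Fin m) (Fin n) ℝ) : nuclearNorm (-A) = nuclearNorm A := by
  rw [nuclearNorm_eq_trace_sqrt, nuclearNorm_eq_trace_sqrt, conjTranspose_neg, Matrix.neg_mul,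
    Matrix.mul_neg, neg_neg]

lemma nuclearNorm_add_of_orthogonal {X Y : Matrix (Fin m) (Fin n) ℝ} (h₁ : Xᴴ * Y = 0)
    (h₂ : X * Yᴴ = 0) : nuclearNorm (X + Y) = nuclearNorm X + nuclearNorm Y := by
  have hYX : Yᴴ * X = 0 := by simpa using congrArg conjTranspose h₁
  have hgram : (X + Y)ᴴ * (X + Y) = Xᴴ * X + Yᴴ * Y := by
    rw [conjTranspose_add, Matrix.add_mul, Matrix.mul_add, Matrix.mul_add, h₁, hYX, add_zero,
      zero_add]
  have hperp : Xᴴ * X * (Yᴴ * Y) = 0 := by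
    rw [Matrix.mul_assoc, ← Matrix.mul_assoc X, h₂, Matrix.zero_mul, Matrix.mul_zero]
  rw [nuclearNorm_eq_trace_sqrt, nuclearNorm_eq_trace_sqrt, nuclearNorm_eq_trace_sqrt, hgram,
    sqrt_add_of_mul_eq_zero (posSemidef_conjTranspose_mul_self X).nonneg
      (posSemidef_conjTranspose_mul_self Y).nonneg hperp, trace_add]

lemma nuclearNorm_eq_sum_sqrt_eigenvalues (A : Matrix (Fin m) (Fin n) ℝ)
    (hA : (Aᴴ * A).IsHermitian) : nuclearNorm A = ∑ j, √(hA.eigenvalues j) := by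
  rw [nuclearNorm, trace_mul_cycle, Unitary.coe_star_mul_self, Matrix.one_mul, trace_diagonal]
  rfl

lemma conjTranspose_mul_self_mul_eigenvectorUnitary (A : Matrix (Fin m) (Fin n) ℝ)
    (hA : (Aᴴ * A).IsHermitian) :
    (A * (hA.eigenvectorUnitary : Matrix (Fin n) (Fin n) ℝ))ᴴ *
        (A * (hA.eigenvectorUnitary : Matrix (Fin n) (Fin n) ℝ)) = diagonal hA.eigenvalues := by
  have h := hA.conjStarAlgAut_star_eigenvectorUnitary
  simp only [Unitary.conjStarAlgAut_apply, RCLike.ofReal_real_eq_id, Function.id_comp] at h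
  rw [← h, conjTranspose_mul, ← star_eq_conjTranspose, Matrix.mul_assoc, Matrix.mul_assoc,
    Matrix.mul_assoc]
  rfl

/-- In an eigenbasis `vⱼ` of `Aᴴ A`, `tr (Zᴴ A) = ∑ ⟪Z vⱼ, A vⱼ⟫ ≤ ∑ ‖A vⱼ‖ = ∑ √μⱼ`. -/
lemma trace_conjTranspose_mul_le_nuclearNorm {Z : Matrix (Fin m) (Fin n) ℝ} (hZ : Zᴴ * Z ≤ 1)
    (A : Matrix (Fin m) (Fin n) ℝ) : (Zᴴ * A).trace ≤ nuclearNorm A := by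
  have hA := isHermitian_conjTranspose_mul_self A
  set V : Matrix (Fin n) (Fin n) ℝ := (hA.eigenvectorUnitary : Matrix (Fin n) (Fin n) ℝ) with hV
  have hZV : ∀ j, ((Z * V)ᴴ * (Z * V)) j j ≤ 1 := by
    have h : (Z * V)ᴴ * (Z * V) ≤ 1 := by
      have := star_left_conjugate_le_conjugate hZ V
      rw [Matrix.mul_one, hV, Unitary.coe_star_mul_self] at this
      simpa only [conjTranspose_mul, star_eq_conjTranspose, Matrix.mul_assoc] using this
    intro j
    simpa using (le_iff.mp h).diag_nonneg (i := j)
  calc (Zᴴ * A).trace = (star V * (Zᴴ * A) * V).trace := by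
        rw [trace_mul_cycle, Unitary.mul_star_self_of_mem hA.eigenvectorUnitary.2, Matrix.one_mul]
    _ = ((Z * V)ᴴ * (A * V)).trace := by
        simp only [conjTranspose_mul, star_eq_conjTranspose, Matrix.mul_assoc]
    _ ≤ ∑ j, √(((Z * V)ᴴ * (Z * V)) j j) * √(((A * V)ᴴ * (A * V)) j j) :=
        trace_conjTranspose_mul_le_sum_sqrt_diag _ _
    _ ≤ ∑ j, √(hA.eigenvalues j) := by
        refine Finset.sum_le_sum fun j _ => ?_
        rw [hV, conjTranspose_mul_self_mul_eigenvectorUnitary, diagonal_apply_eq]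
        exact mul_le_of_le_one_left (Real.sqrt_nonneg _) (Real.sqrt_le_one.mpr (hZV j))
    _ = nuclearNorm A := (nuclearNorm_eq_sum_sqrt_eigenvalues A hA).symm

/-- The witness `Z = A V D Vᴴ`, with `D = diag (μⱼ^(-1/2))`, is the partial isometry of the polar
decomposition `A = Z √(Aᴴ A)`; the junk value `(√0)⁻¹ = 0` is what makes it vanish on `ker A`. -/
lemma exists_trace_conjTranspose_mul_eq_nuclearNorm (A : Matrix (Fin m) (Fin n) ℝ) :
    ∃ Z : Matrix (Fin m) (Fin n) ℝ, Zᴴ * Z ≤ 1 ∧ (Zᴴ * A).trace = nuclearNorm A := by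
  have hA := isHermitian_conjTranspose_mul_self A
  set V : Matrix (Fin n) (Fin n) ℝ := (hA.eigenvectorUnitary : Matrix (Fin n) (Fin n) ℝ) with hV
  set D : Matrix (Fin n) (Fin n) ℝ := diagonal fun j => (√(hA.eigenvalues j))⁻¹ with hD
  have hW := conjTranspose_mul_self_mul_eigenvectorUnitary A hA
  rw [← hV] at hW
  have hDH : Dᴴ = D := by simp [hD]
  refine ⟨A * V * D * star V, ?_, ?_⟩
  · have hZ : (A * V * D * star V)ᴴ * (A * V * D * star V) =
        V * diagonal (fun j => (√(hA.eigenvalues j))⁻¹ * hA.eigenvalues j *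
          (√(hA.eigenvalues j))⁻¹) * star V := by
      rw [← diagonal_mul_diagonal, ← diagonal_mul_diagonal, ← hD, ← hW]
      simp only [conjTranspose_mul, hDH, star_eq_conjTranspose, conjTranspose_conjTranspose,
        Matrix.mul_assoc]
    have hle : diagonal (fun j => (√(hA.eigenvalues j))⁻¹ * hA.eigenvalues j *
          (√(hA.eigenvalues j))⁻¹) ≤ 1 := by
      rw [le_iff, ← diagonal_one, diagonal_sub, posSemidef_diagonal_iff]
      intro j
      rw [sub_nonneg, inv_mul_eq_div, Real.div_sqrt, ← div_eq_mul_inv]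
      exact div_self_le_one _
    rw [hZ]
    refine (star_right_conjugate_le_conjugate hle V).trans_eq ?_
    rw [Matrix.mul_one, hV, Unitary.mul_star_self_of_mem hA.eigenvectorUnitary.2]
  · have hZA : (A * V * D * star V)ᴴ * A = V * (D * (A * V)ᴴ * A) := by
      simp only [conjTranspose_mul, hDH, star_eq_conjTranspose, conjTranspose_conjTranspose,
        Matrix.mul_assoc]
    rw [hZA, trace_mul_comm, Matrix.mul_assoc, Matrix.mul_assoc, hW, hD, diagonal_mul_diagonal,
      trace_diagonal, nuclearNorm_eq_sum_sqrt_eigenvalues A hA]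
    simp only [inv_mul_eq_div, Real.div_sqrt]

lemma nuclearNorm_add_le (A B : Matrix (Fin m) (Fin n) ℝ) :
    nuclearNorm (A + B) ≤ nuclearNorm A + nuclearNorm B := by
  obtain ⟨Z, hZ, hZAB⟩ := exists_trace_conjTranspose_mul_eq_nuclearNorm (A + B)
  rw [← hZAB, Matrix.mul_add, trace_add]
  exact add_le_add (trace_conjTranspose_mul_le_nuclearNorm hZ A)
    (trace_conjTranspose_mul_le_nuclearNorm hZ B)

end NuclearNorm

theorem stmt2_general {m₁ m₂ : ℕ} (L0 Lhat : Matrix (Fin m₁) (Fin m₂) ℝ)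
    (P1 : Matrix (Fin m₁) (Fin m₁) ℝ) (P2 : Matrix (Fin m₂) (Fin m₂) ℝ)
    (hP1sym : P1ᵀ = P1)
    (hP1range : L0ᵀ * P1 = 0)
    (hP2sym : P2ᵀ = P2)
    (hP2range : L0 * P2 = 0) :
    nuclearNorm L0 - nuclearNorm Lhat ≤
      nuclearNorm ((L0 - Lhat) - P1 * (L0 - Lhat) * P2) -
        nuclearNorm (P1 * (L0 - Lhat) * P2) := by
  set A := P1 * (L0 - Lhat) * P2
  have hL0A : L0ᴴ * A = 0 := by
    rw [conjTranspose_eq_transpose_of_trivial, ← Matrix.mul_assoc, ← Matrix.mul_assoc, hP1range,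
      Matrix.zero_mul, Matrix.zero_mul]
  have hL0A' : L0 * Aᴴ = 0 := by
    rw [conjTranspose_eq_transpose_of_trivial, transpose_mul, transpose_mul, hP2sym, hP1sym,
      ← Matrix.mul_assoc, hP2range, Matrix.zero_mul]
  have hsplit : nuclearNorm (L0 - A) = nuclearNorm L0 + nuclearNorm A := by
    rw [sub_eq_add_neg, nuclearNorm_add_of_orthogonal (by rw [Matrix.mul_neg, hL0A, neg_zero])
      (by rw [conjTranspose_neg, Matrix.mul_neg, hL0A', neg_zero]), nuclearNorm_neg]
  have htri : nuclearNorm (L0 - A) ≤ nuclearNorm Lhat + nuclearNorm ((L0 - Lhat) - A) := by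
    rw [show L0 - A = Lhat + ((L0 - Lhat) - A) by abel]
    exact nuclearNorm_add_le _ _
  linarith

/-- Let `P₁` be the orthogonal projector onto the orthogonal complement of the column
space of `L⁰` (characterized by: symmetric, idempotent, range inside `ker L⁰ᵀ`, fixing
`ker L⁰ᵀ`), and `P₂` the orthogonal projector onto the orthogonal complement of the row
space of `L⁰`. With `P_{L⁰⊥}(X) = P₁ X P₂` and `P_{L⁰} = Id - P_{L⁰⊥}`, and
`ΔL = L⁰ - L̂`, one has `‖L⁰‖_* - ‖L̂‖_* ≤ ‖P_{L⁰}(ΔL)‖_* - ‖P_{L⁰⊥}(ΔL)‖_*`. -/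
theorem stmt2 {m₁ m₂ : ℕ} (L0 Lhat : Matrix (Fin m₁) (Fin m₂) ℝ)
    (P1 : Matrix (Fin m₁) (Fin m₁) ℝ) (P2 : Matrix (Fin m₂) (Fin m₂) ℝ)
    (hP1sym : P1ᵀ = P1) (hP1idem : P1 * P1 = P1)
    (hP1range : L0ᵀ * P1 = 0)
    (hP1fix : ∀ x : Fin m₁ → ℝ, L0ᵀ.mulVec x = 0 → P1.mulVec x = x)
    (hP2sym : P2ᵀ = P2) (hP2idem : P2 * P2 = P2)
    (hP2range : L0 * P2 = 0)
    (hP2fix : ∀ x : Fin m₂ → ℝ, L0.mulVec x = 0 → P2.mulVec x = x) :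
    nuclearNorm L0 - nuclearNorm Lhat ≤
      nuclearNorm ((L0 - Lhat) - P1 * (L0 - Lhat) * P2) -
        nuclearNorm (P1 * (L0 - Lhat) * P2) :=
  stmt2_general L0 Lhat P1 P2 hP1sym hP1range hP2sym hP2range
end

section
/- Let f : [−1,1]^n → ℝ be defined by f(x) = sup_{α ∈ A} |Σ_{i=1}^n (x_i − π_i) a_i(α)²| where A is a nonempty set, π_i ∈ [p,1] with p > 0, |a_i(α)| ≤ 1 for all i and α, and Σ_i π_i a_i(α)² ≤ T for all α ∈ A. Then f is Lipschitz with respect to the Euclidean norm with constant √(T/p). -/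
/-!
Each `x ↦ Σ_i (x_i - π_i) a_i(α)²` is affine with linear part `w ↦ Σ_i w_i a_i(α)²`, and the
weighted Cauchy–Schwarz inequality
`(Σ_i w_i a_i²)² ≤ (Σ_i w_i² / π_i) (Σ_i π_i a_i²) ≤ (‖w‖² / p) T` (termwise it needs only
`a_i⁴ ≤ a_i²`) makes all of these `√(T/p)`-Lipschitz. Taking absolute values and then the supremum over `α`
preserves the Lipschitz constant; the same bound with `z = π` shows that the supremum is finite.
-/

open Finset Set

lemma abs_sum_mul_sq_le_sqrt_mul_norm {κ : Type*} [Fintype κ] {p T : ℝ} (hp : 0 < p)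
    {π a : κ → ℝ} (hπ : ∀ i, p ≤ π i) (ha : ∀ i, |a i| ≤ 1) (haT : ∑ i, π i * a i ^ 2 ≤ T)
    (w : EuclideanSpace ℝ κ) :
    |∑ i, w i * a i ^ 2| ≤ √(T / p) * ‖w‖ := by
  have hπpos : ∀ i, 0 < π i := fun i => hp.trans_le (hπ i)
  have hT : 0 ≤ T := (sum_nonneg fun i _ => mul_nonneg (hπpos i).le (sq_nonneg _)).trans haT
  have hcs : (∑ i, w i * a i ^ 2) ^ 2 ≤ (∑ i, w i ^ 2 / π i) * ∑ i, π i * a i ^ 2 :=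
    sum_sq_le_sum_mul_sum_of_sq_le_mul _ (fun i _ => div_nonneg (sq_nonneg _) (hπpos i).le)
      (fun i _ => mul_nonneg (hπpos i).le (sq_nonneg _)) fun i _ => by
        calc (w i * a i ^ 2) ^ 2 = w i ^ 2 * a i ^ 2 * a i ^ 2 := by ring
          _ ≤ w i ^ 2 * a i ^ 2 := mul_le_of_le_one_right (by positivity)
            ((sq_le_one_iff_abs_le_one _).mpr (ha i))
          _ = w i ^ 2 / π i * (π i * a i ^ 2) := by field_simp [(hπpos i).ne']
  have hweighted : ∑ i, w i ^ 2 / π i ≤ ‖w‖ ^ 2 / p := by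
    simp only [EuclideanSpace.norm_sq_eq, Real.norm_eq_abs, sq_abs, sum_div]
    gcongr with i
    exact hπ i
  refine abs_le_of_sq_le_sq ?_ (by positivity)
  calc (∑ i, w i * a i ^ 2) ^ 2 ≤ ‖w‖ ^ 2 / p * T :=
        hcs.trans (mul_le_mul hweighted haT (sum_nonneg fun i _ => mul_nonneg (hπpos i).le
          (sq_nonneg _)) (by positivity))
    _ = (√(T / p) * ‖w‖) ^ 2 := by rw [mul_pow, Real.sq_sqrt (by positivity)]; ring

lemma abs_ciSup_sub_ciSup_le {ι : Type*} [Nonempty ι] {f g : ι → ℝ} (hf : BddAbove (range f))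
    (hg : BddAbove (range g)) {K : ℝ} (h : ∀ i, |f i - g i| ≤ K) :
    |(⨆ i, f i) - ⨆ i, g i| ≤ K := by
  rw [abs_sub_le_iff, sub_le_iff_le_add, sub_le_iff_le_add]
  constructor
  · exact ciSup_le fun i => by linarith [le_ciSup hg i, (abs_le.mp (h i)).2]
  · exact ciSup_le fun i => by linarith [le_ciSup hf i, (abs_le.mp (h i)).1]

theorem stmt8_general {n : ℕ} {ι : Type*} [Nonempty ι] (p T : ℝ)
    (hp : 0 < p)
    (π : Fin n → ℝ) (hπ : ∀ i, π i ∈ Set.Icc p 1)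
    (a : ι → Fin n → ℝ) (ha : ∀ α i, |a α i| ≤ 1)
    (haT : ∀ α, ∑ i, π i * (a α i) ^ 2 ≤ T)
    (x z : EuclideanSpace ℝ (Fin n)) :
    |(⨆ α, |∑ i, (x i - π i) * (a α i) ^ 2|) - (⨆ α, |∑ i, (z i - π i) * (a α i) ^ 2|)| ≤
      Real.sqrt (T / p) * ‖x - z‖ := by
  have hlin : ∀ α (w : EuclideanSpace ℝ (Fin n)), |∑ i, w i * a α i ^ 2| ≤ √(T / p) * ‖w‖ :=
    fun α => abs_sum_mul_sq_le_sqrt_mul_norm hp (fun i => (hπ i).1) (ha α) (haT α)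
  have hbdd : ∀ y : EuclideanSpace ℝ (Fin n),
      BddAbove (range fun α => |∑ i, (y i - π i) * a α i ^ 2|) := fun y =>
    ⟨√(T / p) * ‖y - WithLp.toLp 2 π‖, by
      rintro _ ⟨α, rfl⟩
      simpa using hlin α (y - WithLp.toLp 2 π)⟩
  refine abs_ciSup_sub_ciSup_le (hbdd x) (hbdd z) fun α => ?_
  calc _ ≤ |∑ i, (x i - π i) * a α i ^ 2 - ∑ i, (z i - π i) * a α i ^ 2| :=
        abs_abs_sub_abs_le_abs_sub _ _
    _ = |∑ i, (x - z) i * a α i ^ 2| := by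
        rw [← sum_sub_distrib]
        simp only [PiLp.sub_apply, ← sub_mul, sub_sub_sub_cancel_right]
    _ ≤ √(T / p) * ‖x - z‖ := hlin α (x - z)

/-- The function `x ↦ sup_{α ∈ A} |Σ_i (x_i - π_i) a_i(α)²|` on the cube `[-1,1]^n`
is Lipschitz with constant `√(T/p)` with respect to the Euclidean norm, where
`π_i ∈ [p, 1]`, `|a_i(α)| ≤ 1` and `Σ_i π_i a_i(α)² ≤ T` for all `α ∈ A`. -/
theorem stmt8 {n : ℕ} {ι : Type*} [Nonempty ι] (p T : ℝ)
    (hp : 0 < p) (hp1 : p ≤ 1) (hT : 0 < T)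
    (π : Fin n → ℝ) (hπ : ∀ i, π i ∈ Set.Icc p 1)
    (a : ι → Fin n → ℝ) (ha : ∀ α i, |a α i| ≤ 1)
    (haT : ∀ α, ∑ i, π i * (a α i) ^ 2 ≤ T)
    (x z : EuclideanSpace ℝ (Fin n))
    (hx : ∀ i, x i ∈ Set.Icc (-1 : ℝ) 1) (hz : ∀ i, z i ∈ Set.Icc (-1 : ℝ) 1) :
    |(⨆ α, |∑ i, (x i - π i) * (a α i) ^ 2|) - (⨆ α, |∑ i, (z i - π i) * (a α i) ^ 2|)| ≤
      Real.sqrt (T / p) * ‖x - z‖ :=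
  stmt8_general p T hp π hπ a ha haT x z
end
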